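/- The Jacobian of the system ẋ = F(x,y) := x·((T−2P+S) − (T−S)·y)·g(x,y), ẏ = G(x,y) := (1−y)·((T−P)·x − (P−S))·g(x,y), with g(x,y) = y·(1−x)/(1+y−x+y·x)², evaluated at the interior fixed point (x*, y*) = ((P−S)/(T−P), (T−2P+S)/(T−S)), has zero trace and positive determinant; hence its eigenvalues are purely imaginary (the fixed point is a linear center). -/

import Mathlib

/-!
At the interior fixed point `(x*, y*)` the linear factor of `F` vanishes as a function of `y` and
that of `G` as a function of `x`. Hence `F(·, y*)` and `G(x*, ·)` vanish identically, and on the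
antidiagonal only the derivative of the vanishing factor survives: the Jacobian is
`!![0, -x*(T - S) g; (1 - y*)(T - P) g, 0]` with `g = g(x*, y*) > 0`. Its trace is zero and its
determinant positive, so its characteristic polynomial `λ² + det J` has purely imaginary roots.
-/

noncomputable def gdyn (x y : ℝ) : ℝ := y * (1 - x) / (1 + y - x + y*x)^2

noncomputable def Fdyn (T P S x y : ℝ) : ℝ :=
  x * ((T - 2*P + S) - (T - S) * y) * gdyn x y

noncomputable def Gdyn (T P S x y : ℝ) : ℝ :=
  (1 - y) * ((T - P) * x - (P - S)) * gdyn x y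

theorem Complex.re_eq_zero_of_sq_eq_neg_ofReal {μ : ℂ} {d : ℝ} (hd : 0 ≤ d)
    (h : μ ^ 2 = -d) : μ.re = 0 := by
  have hre : μ.re ^ 2 - μ.im ^ 2 = -d := by simpa [sq] using congrArg Complex.re h
  have him : 2 * μ.re * μ.im = 0 := by
    have := congrArg Complex.im h
    simp only [sq, Complex.mul_im, Complex.neg_im, Complex.ofReal_im] at this
    linarith
  rcases mul_eq_zero.1 him with h2 | him0
  · simpa using h2
  · rw [him0] at hre
    nlinarith [sq_nonneg μ.re]

theorem Matrix.re_eq_zero_of_isRoot_charpoly_map_ofReal {M : Matrix (Fin 2) (Fin 2) ℝ}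
    (htr : M.trace = 0) (hdet : 0 ≤ M.det) {μ : ℂ}
    (hμ : (M.map Complex.ofReal).charpoly.IsRoot μ) : μ.re = 0 := by
  refine Complex.re_eq_zero_of_sq_eq_neg_ofReal hdet ?_
  rw [show M.map Complex.ofReal = M.map Complex.ofRealHom from rfl, Matrix.charpoly_map,
    Matrix.charpoly_fin_two, Polynomial.IsRoot.def] at hμ
  simp only [htr, map_zero, zero_mul, sub_zero, Polynomial.map_add, Polynomial.map_pow,
    Polynomial.map_X, Polynomial.map_C, Complex.ofRealHom_eq_coe, Polynomial.eval_add,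
    Polynomial.eval_pow, Polynomial.eval_X, Polynomial.eval_C] at hμ
  linear_combination hμ

theorem HasDerivAt.mul_of_eq_zero {𝕜 : Type*} [NontriviallyNormedField 𝕜] {f h : 𝕜 → 𝕜}
    {f' x : 𝕜} (hf : HasDerivAt f f' x) (hfx : f x = 0) (hh : DifferentiableAt 𝕜 h x) :
    HasDerivAt (fun t => f t * h t) (f' * h x) x := by
  have := hf.mul hh.hasDerivAt
  rwa [hfx, zero_mul, add_zero] at this

theorem one_add_sub_add_mul_pos {x y : ℝ} (hx0 : 0 ≤ x) (hx1 : x < 1) (hy : 0 ≤ y) :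
    0 < 1 + y - x + y * x := by
  nlinarith [mul_nonneg hy hx0]

theorem gdyn_pos {x y : ℝ} (hx0 : 0 ≤ x) (hx1 : x < 1) (hy : 0 < y) : 0 < gdyn x y := by
  have := one_add_sub_add_mul_pos hx0 hx1 hy.le
  unfold gdyn
  exact div_pos (mul_pos hy (by linarith)) (by positivity)

theorem differentiableAt_gdyn_left {x y : ℝ} (h : 1 + y - x + y * x ≠ 0) :
    DifferentiableAt ℝ (fun x => gdyn x y) x := by
  unfold gdyn
  fun_prop (disch := exact pow_ne_zero 2 h)

theorem differentiableAt_gdyn_right {x y : ℝ} (h : 1 + y - x + y * x ≠ 0) :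
    DifferentiableAt ℝ (fun y => gdyn x y) y := by
  unfold gdyn
  fun_prop (disch := exact pow_ne_zero 2 h)

section Jacobian

variable {T P S x y : ℝ}

theorem deriv_Fdyn_left_of_factor_eq_zero (hy : (T - 2*P + S) - (T - S) * y = 0) :
    deriv (fun x => Fdyn T P S x y) x = 0 := by
  have hF : (fun x => Fdyn T P S x y) = fun _ => 0 := by
    funext x
    rw [Fdyn, hy, mul_zero, zero_mul]
  rw [hF, deriv_const]

theorem deriv_Gdyn_right_of_factor_eq_zero (hx : (T - P) * x - (P - S) = 0) :
    deriv (fun y => Gdyn T P S x y) y = 0 := by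
  have hG : (fun y => Gdyn T P S x y) = fun _ => 0 := by
    funext y
    rw [Gdyn, hx, mul_zero, zero_mul]
  rw [hG, deriv_const]

theorem deriv_Fdyn_right_of_factor_eq_zero (hy : (T - 2*P + S) - (T - S) * y = 0)
    (hD : 1 + y - x + y * x ≠ 0) :
    deriv (fun y => Fdyn T P S x y) y = -(x * (T - S)) * gdyn x y := by
  have hfactor : HasDerivAt (fun y => x * ((T - 2*P + S) - (T - S) * y)) (-(x * (T - S))) y :=
    (((hasDerivAt_id' y).const_mul (T - S)).const_sub _ |>.const_mul x).congr_deriv (by ring)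
  exact (hfactor.mul_of_eq_zero (by rw [hy, mul_zero]) (differentiableAt_gdyn_right hD)).deriv

theorem deriv_Gdyn_left_of_factor_eq_zero (hx : (T - P) * x - (P - S) = 0)
    (hD : 1 + y - x + y * x ≠ 0) :
    deriv (fun x => Gdyn T P S x y) x = (1 - y) * (T - P) * gdyn x y := by
  have hfactor : HasDerivAt (fun x => (1 - y) * ((T - P) * x - (P - S))) ((1 - y) * (T - P)) x :=
    (((hasDerivAt_id' x).const_mul (T - P)).sub_const _ |>.const_mul _).congr_deriv (by ring)
  exact (hfactor.mul_of_eq_zero (by rw [hx, mul_zero]) (differentiableAt_gdyn_left hD)).deriv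

end Jacobian

theorem pd_fixed_point_is_center_general (T P S : ℝ)
    (hPS : P > S) (hsub : T + S > 2*P) :
    let xs : ℝ := (P - S)/(T - P)
    let ys : ℝ := (T - 2*P + S)/(T - S)
    let J : Matrix (Fin 2) (Fin 2) ℝ :=
      !![deriv (fun x => Fdyn T P S x ys) xs, deriv (fun y => Fdyn T P S xs y) ys;
         deriv (fun x => Gdyn T P S x ys) xs, deriv (fun y => Gdyn T P S xs y) ys]
    J.trace = 0 ∧ 0 < J.det ∧
      ∀ μ : ℂ, (J.map (Complex.ofReal)).charpoly.IsRoot μ → μ.re = 0 := by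
  intro xs ys J
  have hTP : 0 < T - P := by linarith
  have hTS : 0 < T - S := by linarith
  have hxs0 : 0 < xs := div_pos (by linarith) hTP
  have hxs1 : xs < 1 := (div_lt_one hTP).2 (by linarith)
  have hys0 : 0 < ys := div_pos (by linarith) hTS
  have hys1 : ys < 1 := (div_lt_one hTS).2 (by linarith)
  have hx : (T - P) * xs - (P - S) = 0 := by rw [mul_div_cancel₀ _ hTP.ne', sub_self]
  have hy : (T - 2*P + S) - (T - S) * ys = 0 := by rw [mul_div_cancel₀ _ hTS.ne', sub_self]
  have hD := (one_add_sub_add_mul_pos hxs0.le hxs1 hys0.le).ne'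
  have hJ : J = !![0, -(xs * (T - S)) * gdyn xs ys; (1 - ys) * (T - P) * gdyn xs ys, 0] := by
    simp only [J, deriv_Fdyn_left_of_factor_eq_zero hy, deriv_Fdyn_right_of_factor_eq_zero hy hD,
      deriv_Gdyn_left_of_factor_eq_zero hx hD, deriv_Gdyn_right_of_factor_eq_zero hx]
  have htr : J.trace = 0 := by rw [hJ, Matrix.trace_fin_two_of, add_zero]
  have hdet : 0 < J.det := by
    have hg := gdyn_pos hxs0.le hxs1 hys0
    have hys1_sub : 0 < 1 - ys := by linarith
    rw [hJ, Matrix.det_fin_two_of]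
    linarith [mul_pos (mul_pos (mul_pos hxs0 hTS) hg) (mul_pos (mul_pos hys1_sub hTP) hg)]
  exact ⟨htr, hdet, fun _ => Matrix.re_eq_zero_of_isRoot_charpoly_map_ofReal htr hdet.le⟩

/-- The Jacobian of the exploitation dynamics at the interior fixed point has
zero trace and positive determinant, so its eigenvalues are purely imaginary
(the fixed point is a linear center). -/
theorem pd_fixed_point_is_center (T R P S : ℝ)
    (hTR : T > R) (hRP : R > P) (hPS : P > S) (hsub : T + S > 2*P) :
    let xs : ℝ := (P - S)/(T - P)
    let ys : ℝ := (T - 2*P + S)/(T - S)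
    let J : Matrix (Fin 2) (Fin 2) ℝ :=
      !![deriv (fun x => Fdyn T P S x ys) xs, deriv (fun y => Fdyn T P S xs y) ys;
         deriv (fun x => Gdyn T P S x ys) xs, deriv (fun y => Gdyn T P S xs y) ys]
    J.trace = 0 ∧ 0 < J.det ∧
      ∀ μ : ℂ, (J.map (Complex.ofReal)).charpoly.IsRoot μ → μ.re = 0 :=
  pd_fixed_point_is_center_general T P S hPS hsub
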